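/- arXiv:1603.02059 — 3 statements merged into one kernel-verified Lean document; each statement's English description precedes it below -/
import Mathlib

section
/- The feasibility region FR = {(⟨f, L f⟩, ⟨f̂, L f̂⟩) : ‖f‖ = 1} is a convex subset of ℝ² when N ≥ 3. -/
/-!
The second coordinate is `⟨f, χ L χᵀ f⟩`, so the region is the joint numerical range of the two
symmetric matrices `A = L` and `B = χ L χᵀ`, which is convex in dimension at least three (Brickman).
Two points `p ≠ q` of the range lie on a line `α u + β v = c`, so their preimages lie on the
null sphere `{‖z‖ = 1, ⟨z, Q z⟩ = 0}` of `Q = α A + β B - c`. After diagonalising `Q`, paths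
`t ↦ σ * √((1 - t) u² + t v²)` join points with a common sign pattern `σ`, and a third coordinate
gives room to flip the remaining signs, so the null sphere is path connected up to `z ↦ -z`.
Along such a path the coordinate `β ⟨z, A z⟩ - α ⟨z, B z⟩` along the line takes every intermediate
value, which produces preimages of all points of the segment `[p, q]`.
-/

open Matrix BigOperators

/-- A simple (loopless, undirected) connected weighted graph on `N` vertices,
presented via its weight function. -/
structure GraphLaplacian (N : ℕ) where
  w : Fin N → Fin N → ℝ
  symm : ∀ i j, w i j = w j i
  nonneg : ∀ i j, 0 ≤ w i j
  loopless : ∀ i, w i i = 0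
  connected : ∀ i j : Fin N, Relation.ReflTransGen (fun a b => 0 < w a b) i j

/-- The graph Laplacian `L = D - A`. -/
def GraphLaplacian.L {N : ℕ} (G : GraphLaplacian N) : Matrix (Fin N) (Fin N) ℝ :=
  fun i j => if i = j then ∑ k, G.w i k else -G.w i j

open Set

section Orthogonal

variable {ι κ R : Type*} [Fintype ι] [Fintype κ]

theorem mulVec_dotProduct_mulVec [CommSemiring R] (U : Matrix κ ι R) (M : Matrix κ κ R)
    (x : ι → R) : (U *ᵥ x) ⬝ᵥ (M *ᵥ (U *ᵥ x)) = x ⬝ᵥ ((Uᵀ * M * U) *ᵥ x) := by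
  rw [← mulVec_mulVec, ← mulVec_mulVec, dotProduct_mulVec x, vecMul_transpose]

omit [Fintype ι] in
theorem Matrix.IsSymm.transpose_mul_mul [CommSemiring R] {M : Matrix κ κ R} (hM : M.IsSymm)
    (U : Matrix κ ι R) : (Uᵀ * M * U).IsSymm := by
  simp [IsSymm, transpose_mul, hM.eq, Matrix.mul_assoc]

theorem Matrix.IsSymm.exists_orthogonal_diagonal [DecidableEq ι] {Q : Matrix ι ι ℝ}
    (hQ : Q.IsSymm) : ∃ (U : Matrix ι ι ℝ) (d : ι → ℝ),
      Uᵀ * U = 1 ∧ Uᵀ * Q * U = diagonal d := by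
  have hH : Q.IsHermitian := isHermitian_iff_isSymm.2 hQ
  have hstar : star (hH.eigenvectorUnitary : Matrix ι ι ℝ) = (hH.eigenvectorUnitary)ᵀ := by
    rw [star_eq_conjTranspose, conjTranspose_eq_transpose_of_trivial]
  refine ⟨hH.eigenvectorUnitary, hH.eigenvalues, ?_, ?_⟩
  · rw [← hstar, Unitary.coe_star_mul_self]
  · have h := hH.conjStarAlgAut_star_eigenvectorUnitary
    rw [Unitary.conjStarAlgAut_star_apply, hstar] at h
    simpa using h

end Orthogonal

variable {ι : Type*} [Fintype ι]

def nullSphere (Q : Matrix ι ι ℝ) : Set (ι → ℝ) := {z | z ⬝ᵥ z = 1 ∧ z ⬝ᵥ (Q *ᵥ z) = 0}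

theorem neg_nullSphere_subset (Q : Matrix ι ι ℝ) : -nullSphere Q ⊆ nullSphere Q := by
  intro z hz
  simpa [nullSphere, mulVec_neg] using hz

theorem mulVec_mem_nullSphere_iff [DecidableEq ι] {U Q : Matrix ι ι ℝ} (hU : Uᵀ * U = 1)
    {z : ι → ℝ} : U *ᵥ z ∈ nullSphere Q ↔ z ∈ nullSphere (Uᵀ * Q * U) := by
  have hnorm := mulVec_dotProduct_mulVec U 1 z
  rw [one_mulVec, Matrix.mul_one, hU, one_mulVec] at hnorm
  simp only [nullSphere, mem_ofPred_eq, hnorm, mulVec_dotProduct_mulVec]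

theorem mem_nullSphere_diagonal [DecidableEq ι] {d z : ι → ℝ} :
    z ∈ nullSphere (diagonal d) ↔ ∑ i, z i ^ 2 = 1 ∧ ∑ i, d i * z i ^ 2 = 0 := by
  simp only [nullSphere, mem_ofPred_eq, dotProduct, mulVec_diagonal, sq, mul_left_comm]

theorem mem_nullSphere_diagonal_congr [DecidableEq ι] {d z w : ι → ℝ}
    (h : ∀ i, z i ^ 2 = w i ^ 2) : z ∈ nullSphere (diagonal d) ↔ w ∈ nullSphere (diagonal d) := by
  simp only [mem_nullSphere_diagonal, h]

def IsSignVector (σ : ι → ℝ) : Prop := ∀ i, σ i = 1 ∨ σ i = -1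

omit [Fintype ι] in
theorem IsSignVector.mul_apply_sq {σ : ι → ℝ} (hσ : IsSignVector σ) (x : ι → ℝ) (i : ι) :
    (σ * x) i ^ 2 = x i ^ 2 := by
  rcases hσ i with h | h <;> simp [h]

theorem joinedIn_sign_mul_nullSphere_diagonal [DecidableEq ι] {d σ u v : ι → ℝ}
    (hσ : IsSignVector σ) (hu : 0 ≤ u) (hv : 0 ≤ v)
    (huS : u ∈ nullSphere (diagonal d)) (hvS : v ∈ nullSphere (diagonal d)) :
    JoinedIn (nullSphere (diagonal d)) (σ * u) (σ * v) := by
  -- Both constraints are linear in the squares `z i ^ 2`, which move linearly along `γ`.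
  let γ : ℝ → ι → ℝ := fun t => σ * fun i => √((1 - t) * u i ^ 2 + t * v i ^ 2)
  have hγ_sq : ∀ t ∈ Icc (0 : ℝ) 1, ∀ i, γ t i ^ 2 = (1 - t) * u i ^ 2 + t * v i ^ 2 := by
    intro t ht i
    rw [hσ.mul_apply_sq, Real.sq_sqrt (add_nonneg (mul_nonneg (sub_nonneg.2 ht.2) (sq_nonneg _))
      (mul_nonneg ht.1 (sq_nonneg _)))]
  have hγ_mem : ∀ t ∈ Icc (0 : ℝ) 1, γ t ∈ nullSphere (diagonal d) := by
    intro t ht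
    rw [mem_nullSphere_diagonal] at huS hvS ⊢
    simp only [hγ_sq t ht, mul_add, Finset.sum_add_distrib, mul_left_comm (d _),
      ← Finset.mul_sum, huS.1, hvS.1, huS.2, hvS.2]
    constructor <;> ring
  have hγ0 : γ 0 = σ * u := by
    ext i; simp [γ, Real.sqrt_sq (hu i)]
  have hγ1 : γ 1 = σ * v := by
    ext i; simp [γ, Real.sqrt_sq (hv i)]
  refine ⟨⟨⟨fun t => γ t, by fun_prop⟩, hγ0, hγ1⟩, fun t => hγ_mem t t.2⟩

omit [Fintype ι] in
theorem exists_sign_mul_abs (x : ι → ℝ) :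
    ∃ σ : ι → ℝ, IsSignVector σ ∧ σ * |x| = x := by
  refine ⟨fun i => if x i < 0 then -1 else 1, fun i => by by_cases h : x i < 0 <;> simp [h], ?_⟩
  ext i
  by_cases h : x i < 0 <;> simp [h, abs_of_neg, abs_of_nonneg, not_lt.1]

omit [Fintype ι] in
theorem mul_eq_mul_of_eq_on_support {R : Type*} [MulZeroClass R] {σ τ w : ι → R} (h : ∀ i, w i ≠ 0 → σ i = τ i) :
    σ * w = τ * w := by
  ext i
  by_cases hi : w i = 0 <;> simp [hi, h i]

theorem exists_joinedIn_sign_mul [DecidableEq ι] {d x w : ι → ℝ}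
    (hx : x ∈ nullSphere (diagonal d)) (hw : 0 ≤ w) (hwS : w ∈ nullSphere (diagonal d)) :
    ∃ σ : ι → ℝ, IsSignVector σ ∧ JoinedIn (nullSphere (diagonal d)) x (σ * w) := by
  obtain ⟨σ, hσ, hσx⟩ := exists_sign_mul_abs x
  have habs : |x| ∈ nullSphere (diagonal d) := (mem_nullSphere_diagonal_congr (by simp)).2 hx
  refine ⟨σ, hσ, ?_⟩
  simpa only [hσx] using joinedIn_sign_mul_nullSphere_diagonal hσ (abs_nonneg x) hw habs hwS

theorem joinedIn_sign_mul_smul [DecidableEq ι] {d σ v w : ι → ℝ} {i j : ι}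
    (hσ : IsSignVector σ) (hw : 0 ≤ w) (hwS : w ∈ nullSphere (diagonal d))
    (hw_supp : ∀ l, w l ≠ 0 → l = i ∨ l = j) (hv : 0 ≤ v) (hvS : v ∈ nullSphere (diagonal d))
    (hvj : v j = 0) :
    JoinedIn (nullSphere (diagonal d)) (σ * w) (σ i • w) := by
  by_cases hij : σ j = σ i
  · have hσw : σ * w = σ i • w := mul_eq_mul_of_eq_on_support fun l hl => by
      rcases hw_supp l hl with rfl | rfl <;> simp [hij]
    rw [← hσw]
    exact JoinedIn.refl ((mem_nullSphere_diagonal_congr (hσ.mul_apply_sq w)).2 hwS)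
  · set τ := Function.update σ j (σ i)
    have hτ : IsSignVector τ := fun l => by
      by_cases hl : l = j <;> simp [τ, hl, hσ i, hσ l]
    -- `v` vanishes at `j`, so the sign at `j` can be switched while passing through `v`.
    have hτv : σ * v = τ * v := mul_eq_mul_of_eq_on_support fun l hl => by
      have : l ≠ j := by rintro rfl; exact hl hvj
      simp [τ, this]
    have hτw : τ * w = σ i • w := mul_eq_mul_of_eq_on_support fun l hl => by
      rcases hw_supp l hl with rfl | rfl
      · have : l ≠ j := by rintro rfl; exact hij rfl
        simp [τ, this]
      · simp [τ]
    have h₁ := joinedIn_sign_mul_nullSphere_diagonal hσ hw hv hwS hvS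
    have h₂ := joinedIn_sign_mul_nullSphere_diagonal hτ hv hw hvS hwS
    rw [hτv] at h₁
    rw [hτw] at h₂
    exact h₁.trans h₂

theorem exists_pos_of_mem_nullSphere_diagonal [DecidableEq ι] {d x : ι → ℝ}
    (hx : x ∈ nullSphere (diagonal d)) (hd : ∀ i, d i ≠ 0) : ∃ i, 0 < d i := by
  by_contra! hneg
  rw [mem_nullSphere_diagonal] at hx
  have hterm := (Finset.sum_eq_zero_iff_of_nonpos fun i _ =>
    mul_nonpos_of_nonpos_of_nonneg (hneg i) (sq_nonneg (x i))).1 hx.2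
  have hx0 : ∀ i, x i ^ 2 = 0 := fun i =>
    (mul_eq_zero.1 (hterm i (Finset.mem_univ i))).resolve_left (hd i)
  simp [hx0] at hx

theorem exists_neg_of_mem_nullSphere_diagonal [DecidableEq ι] {d x : ι → ℝ}
    (hx : x ∈ nullSphere (diagonal d)) (hd : ∀ i, d i ≠ 0) : ∃ i, d i < 0 := by
  have hx' : x ∈ nullSphere (diagonal (-d)) := by
    rw [mem_nullSphere_diagonal] at hx ⊢
    simpa [neg_mul, Finset.sum_neg_distrib] using hx
  simpa using exists_pos_of_mem_nullSphere_diagonal hx' (by simpa using hd)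

theorem exists_nonneg_mem_nullSphere_diagonal_of_pos_of_neg [DecidableEq ι] {d : ι → ℝ} {i j : ι}
    (hi : 0 < d i) (hj : d j < 0) : ∃ w : ι → ℝ, 0 ≤ w ∧ w ∈ nullSphere (diagonal d) ∧
      ∀ l, w l ≠ 0 → l = i ∨ l = j := by
  have hij : i ≠ j := by rintro rfl; linarith
  have hgap : 0 < d i - d j := by linarith
  set a := √(-d j / (d i - d j))
  set b := √(d i / (d i - d j))
  have ha : a ^ 2 = -d j / (d i - d j) := Real.sq_sqrt (div_nonneg (by linarith) hgap.le)
  have hb : b ^ 2 = d i / (d i - d j) := Real.sq_sqrt (div_nonneg hi.le hgap.le)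
  refine ⟨fun l => if l = i then a else if l = j then b else 0, fun l => ?_, ?_, fun l hl => ?_⟩
  · dsimp only; split_ifs <;> positivity
  · rw [mem_nullSphere_diagonal]
    have hsum (f : ι → ℝ) : ∑ l, f l * (if l = i then a else if l = j then b else 0) ^ 2 =
        f i * a ^ 2 + f j * b ^ 2 := by
      rw [Fintype.sum_eq_add i j hij fun l hl => by simp [hl.1, hl.2]]
      simp [hij.symm]
    constructor
    · have h1 := hsum 1
      simp only [Pi.one_apply, one_mul] at h1
      rw [h1, ha, hb]
      field_simp
      ring
    · rw [hsum, ha, hb]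
      field_simp
      ring
  · by_contra! h
    simp [h.1, h.2] at hl

theorem exists_pole_nullSphere_diagonal [DecidableEq ι] (hι : 3 ≤ Fintype.card ι)
    {d x₀ : ι → ℝ} (hx₀ : x₀ ∈ nullSphere (diagonal d)) :
    ∃ e ∈ nullSphere (diagonal d), ∀ x ∈ nullSphere (diagonal d),
      ∃ c : ℝ, (c = 1 ∨ c = -1) ∧ JoinedIn (nullSphere (diagonal d)) x (c • e) := by
  by_cases hzero : ∃ k, d k = 0
  · obtain ⟨k, hk⟩ := hzero
    have he : Pi.single k 1 ∈ nullSphere (diagonal d) := by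
      rw [mem_nullSphere_diagonal]
      simp [Pi.single_apply, hk]
    refine ⟨Pi.single k 1, he, fun x hx => ?_⟩
    obtain ⟨σ, hσ, hxe⟩ := exists_joinedIn_sign_mul hx (Pi.single_nonneg.2 zero_le_one) he
    refine ⟨σ k, hσ k, ?_⟩
    rwa [mul_eq_mul_of_eq_on_support (τ := fun _ => σ k) fun l hl => by
      rw [Pi.single_apply] at hl; simp_all] at hxe
  · simp only [not_exists, ← ne_eq] at hzero
    obtain ⟨i, hi⟩ := exists_pos_of_mem_nullSphere_diagonal hx₀ hzero
    obtain ⟨j, hj⟩ := exists_neg_of_mem_nullSphere_diagonal hx₀ hzero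
    obtain ⟨k, hki, hkj⟩ := ENat.exists_ne_ne_of_three_le (by simpa using hι) i j
    obtain ⟨w, hw, hwS, hw_supp⟩ := exists_nonneg_mem_nullSphere_diagonal_of_pos_of_neg hi hj
    refine ⟨w, hwS, fun x hx => ?_⟩
    obtain ⟨σ, hσ, hxw⟩ := exists_joinedIn_sign_mul hx hw hwS
    -- The third index `k` gives a nonnegative point vanishing at `j` or at `i`, through which
    -- the sign of `σ * w` at that index can be flipped.
    rcases (hzero k).lt_or_gt with hk | hk
    · obtain ⟨v, hv, hvS, hv_supp⟩ := exists_nonneg_mem_nullSphere_diagonal_of_pos_of_neg hi hk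
      have hvj : v j = 0 := by
        by_contra h
        rcases hv_supp j h with rfl | rfl
        · exact hj.not_gt hi
        · exact hkj rfl
      exact ⟨σ i, hσ i, hxw.trans (joinedIn_sign_mul_smul hσ hw hwS hw_supp hv hvS hvj)⟩
    · obtain ⟨v, hv, hvS, hv_supp⟩ := exists_nonneg_mem_nullSphere_diagonal_of_pos_of_neg hk hj
      have hvi : v i = 0 := by
        by_contra h
        rcases hv_supp i h with rfl | rfl
        · exact hki rfl
        · exact hj.not_gt hi
      exact ⟨σ j, hσ j, hxw.trans (joinedIn_sign_mul_smul hσ hw hwS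
        (fun l hl => (hw_supp l hl).symm) hv hvS hvi)⟩

theorem joinedIn_or_joinedIn_neg_of_pole {E : Type*} [TopologicalSpace E] [AddCommGroup E]
    [Module ℝ E] [ContinuousNeg E] {S : Set E} (hS : -S ⊆ S) {e : E}
    (he : ∀ x ∈ S, ∃ c : ℝ, (c = 1 ∨ c = -1) ∧ JoinedIn S x (c • e)) {x y : E}
    (hx : x ∈ S) (hy : y ∈ S) : JoinedIn S x y ∨ JoinedIn S x (-y) := by
  obtain ⟨a, ha, hxa⟩ := he x hx
  obtain ⟨b, hb, hyb⟩ := he y hy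
  have hyb' := hyb.neg.mono hS
  rcases ha with rfl | rfl <;> rcases hb with rfl | rfl <;>
    simp only [one_smul, neg_one_smul, neg_neg] at hxa hyb hyb'
  · exact .inl (hxa.trans hyb.symm)
  · exact .inr (hxa.trans hyb'.symm)
  · exact .inr (hxa.trans hyb'.symm)
  · exact .inl (hxa.trans hyb.symm)

theorem JoinedIn.exists_mem_eq_of_mem_uIcc {X α : Type*} [TopologicalSpace X] [LinearOrder α]
    [TopologicalSpace α] [OrderClosedTopology α] {F : Set X} {x y : X} (h : JoinedIn F x y)
    {f : X → α} (hf : Continuous f) {r : α} (hr : r ∈ uIcc (f x) (f y)) : ∃ z ∈ F, f z = r := by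
  obtain ⟨γ, hγ⟩ := h
  obtain ⟨t, rfl⟩ : r ∈ range (f ∘ γ) := by
    rcases mem_uIcc.1 hr with hr | hr
    · exact intermediate_value_univ 0 1 (hf.comp γ.continuous) (by simpa using hr)
    · exact intermediate_value_univ 1 0 (hf.comp γ.continuous) (by simpa using hr)
  exact ⟨γ t, hγ t, rfl⟩

theorem Matrix.IsSymm.joinedIn_or_joinedIn_neg_nullSphere (hι : 3 ≤ Fintype.card ι)
    {Q : Matrix ι ι ℝ} (hQ : Q.IsSymm) {x y : ι → ℝ} (hx : x ∈ nullSphere Q)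
    (hy : y ∈ nullSphere Q) : JoinedIn (nullSphere Q) x y ∨ JoinedIn (nullSphere Q) x (-y) := by
  classical
  obtain ⟨U, d, hU, hUQU⟩ := hQ.exists_orthogonal_diagonal
  have hUUt : ∀ z, U *ᵥ (Uᵀ *ᵥ z) = z := by simp [mulVec_mulVec, mul_eq_one_comm.1 hU]
  have hmem : ∀ z ∈ nullSphere Q, Uᵀ *ᵥ z ∈ nullSphere (diagonal d) := fun z hz => by
    rwa [← hUQU, ← mulVec_mem_nullSphere_iff hU, hUUt]
  have hmap : (U *ᵥ ·) '' nullSphere (diagonal d) ⊆ nullSphere Q := by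
    rintro _ ⟨z, hz, rfl⟩
    rwa [mulVec_mem_nullSphere_iff hU, hUQU]
  have hU_cont : Continuous (U *ᵥ · : (ι → ℝ) → ι → ℝ) := by fun_prop
  obtain ⟨e, -, he⟩ := exists_pole_nullSphere_diagonal hι (hmem x hx)
  refine (joinedIn_or_joinedIn_neg_of_pole (neg_nullSphere_subset (diagonal d)) he (hmem x hx)
    (hmem y hy)).imp (fun h => ?_) (fun h => ?_) <;>
  simpa [hUUt, mulVec_neg] using (h.map hU_cont).mono hmap

theorem Matrix.IsSymm.exists_mem_nullSphere_eq_of_mem_uIcc (hι : 3 ≤ Fintype.card ι)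
    {Q : Matrix ι ι ℝ} (hQ : Q.IsSymm) {x y : ι → ℝ} (hx : x ∈ nullSphere Q)
    (hy : y ∈ nullSphere Q) (R : Matrix ι ι ℝ) {r : ℝ}
    (hr : r ∈ uIcc (x ⬝ᵥ (R *ᵥ x)) (y ⬝ᵥ (R *ᵥ y))) :
    ∃ z ∈ nullSphere Q, z ⬝ᵥ (R *ᵥ z) = r := by
  have hR : Continuous fun z : ι → ℝ => z ⬝ᵥ (R *ᵥ z) := by fun_prop
  rcases hQ.joinedIn_or_joinedIn_neg_nullSphere hι hx hy with h | h
  · exact h.exists_mem_eq_of_mem_uIcc hR hr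
  · exact h.exists_mem_eq_of_mem_uIcc hR (by simpa [mulVec_neg] using hr)

def jointNumericalRange (A B : Matrix ι ι ℝ) : Set (ℝ × ℝ) :=
  {p | ∃ x : ι → ℝ, x ⬝ᵥ x = 1 ∧ p = (x ⬝ᵥ (A *ᵥ x), x ⬝ᵥ (B *ᵥ x))}

theorem Prod.eq_of_mul_add_mul_eq_of_mul_sub_mul_eq {α β : ℝ} (hαβ : (α, β) ≠ 0)
    {w t : ℝ × ℝ} (h₁ : α * w.1 + β * w.2 = α * t.1 + β * t.2)
    (h₂ : β * w.1 - α * w.2 = β * t.1 - α * t.2) : w = t := by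
  have hpos : α ^ 2 + β ^ 2 ≠ 0 := by
    contrapose! hαβ
    simp only [Prod.mk_eq_zero]
    constructor <;> nlinarith [sq_nonneg α, sq_nonneg β]
  ext
  · exact mul_left_cancel₀ hpos (by linear_combination α * h₁ + β * h₂)
  · exact mul_left_cancel₀ hpos (by linear_combination β * h₁ - α * h₂)

theorem convex_jointNumericalRange (hι : 3 ≤ Fintype.card ι) {A B : Matrix ι ι ℝ}
    (hA : A.IsSymm) (hB : B.IsSymm) : Convex ℝ (jointNumericalRange A B) := by
  classical
  refine convex_iff_pairwise_pos.2 ?_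
  rintro _ ⟨x, hx, rfl⟩ _ ⟨y, hy, rfl⟩ hxy a b ha hb hab
  set α := y ⬝ᵥ (B *ᵥ y) - x ⬝ᵥ (B *ᵥ x) with hα
  set β := x ⬝ᵥ (A *ᵥ x) - y ⬝ᵥ (A *ᵥ y) with hβ
  set c := α * x ⬝ᵥ (A *ᵥ x) + β * x ⬝ᵥ (B *ᵥ x) with hc
  have hcy : α * y ⬝ᵥ (A *ᵥ y) + β * y ⬝ᵥ (B *ᵥ y) = c := by ring
  have hQ : ∀ z : ι → ℝ, z ⬝ᵥ ((α • A + β • B - c • 1) *ᵥ z) =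
      α * z ⬝ᵥ (A *ᵥ z) + β * z ⬝ᵥ (B *ᵥ z) - c * z ⬝ᵥ z := fun z => by
    simp only [add_mulVec, sub_mulVec, smul_mulVec, one_mulVec, dotProduct_add, dotProduct_sub,
      dotProduct_smul, smul_eq_mul]
  have hR : ∀ z : ι → ℝ, z ⬝ᵥ ((β • A - α • B) *ᵥ z) =
      β * z ⬝ᵥ (A *ᵥ z) - α * z ⬝ᵥ (B *ᵥ z) := fun z => by
    simp only [sub_mulVec, smul_mulVec, dotProduct_sub, dotProduct_smul, smul_eq_mul]
  have hxQ : x ∈ nullSphere (α • A + β • B - c • 1) := ⟨hx, by rw [hQ, hx]; ring⟩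
  have hyQ : y ∈ nullSphere (α • A + β • B - c • 1) := ⟨hy, by rw [hQ, hy, hcy]; ring⟩
  have hsymm : (α • A + β • B - c • 1).IsSymm := ((hA.smul α).add (hB.smul β)).sub
    (isSymm_one.smul c)
  obtain ⟨z, ⟨hz, hzQ⟩, hzR⟩ := hsymm.exists_mem_nullSphere_eq_of_mem_uIcc hι hxQ hyQ
    (β • A - α • B) (r := a * x ⬝ᵥ ((β • A - α • B) *ᵥ x) + b * y ⬝ᵥ ((β • A - α • B) *ᵥ y))
    (by rw [← segment_eq_uIcc]; exact ⟨a, b, ha.le, hb.le, hab, rfl⟩)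
  refine ⟨z, hz, (Prod.eq_of_mul_add_mul_eq_of_mul_sub_mul_eq (α := α) (β := β) ?_ ?_ ?_).symm⟩
  · intro h
    apply hxy
    simp only [Prod.mk_eq_zero, hα, hβ, sub_eq_zero] at h
    rw [h.1, h.2]
  · rw [hQ, hz] at hzQ
    simp only [Prod.smul_fst, Prod.smul_snd, Prod.fst_add, Prod.snd_add, smul_eq_mul]
    linear_combination hzQ - a * hc.symm - b * hcy - c * hab
  · rw [hR, hR, hR] at hzR
    simp only [Prod.smul_fst, Prod.smul_snd, Prod.fst_add, Prod.snd_add, smul_eq_mul]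
    linear_combination hzR

theorem GraphLaplacian.isSymm_L {N : ℕ} (G : GraphLaplacian N) : G.L.IsSymm := by
  refine IsSymm.ext fun i j => ?_
  by_cases h : i = j
  · subst h; rfl
  · simp [GraphLaplacian.L, h, Ne.symm h, G.symm i j]

theorem feasibility_region_convex_general {N : ℕ} (hN : 3 ≤ N) (G : GraphLaplacian N)
    (χ : Matrix (Fin N) (Fin N) ℝ) :
    Convex ℝ {p : ℝ × ℝ | ∃ f : Fin N → ℝ, f ⬝ᵥ f = 1 ∧
      p = (f ⬝ᵥ (G.L *ᵥ f), (χᵀ *ᵥ f) ⬝ᵥ (G.L *ᵥ (χᵀ *ᵥ f)))} := by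
  simpa only [jointNumericalRange, mulVec_dotProduct_mulVec] using
    convex_jointNumericalRange (by simpa using hN) G.isSymm_L (G.isSymm_L.transpose_mul_mul χᵀ)

/-- the feasibility region `FR = {(⟨f, L f⟩, ⟨f̂, L f̂⟩) : ‖f‖ = 1}` is convex
when `N ≥ 3`. -/
theorem feasibility_region_convex {N : ℕ} (hN : 3 ≤ N) (G : GraphLaplacian N)
    (χ : Matrix (Fin N) (Fin N) ℝ) (lam : Fin N → ℝ)
    (hχ : χᵀ * χ = 1)
    (hdiag : χᵀ * G.L * χ = Matrix.diagonal lam) :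
    Convex ℝ {p : ℝ × ℝ | ∃ f : Fin N → ℝ, f ⬝ᵥ f = 1 ∧
      p = (f ⬝ᵥ (G.L *ᵥ f), (χᵀ *ᵥ f) ⬝ᵥ (G.L *ᵥ (χᵀ *ᵥ f)))} :=
  feasibility_region_convex_general hN G χ
end

section
/- The functions H₊(α) = max{⟨g, Δ g⟩ : g ∈ σ(α), ‖g‖ = 1} and H₋(α) = min{⟨g, Δ g⟩ : g ∈ σ(α), ‖g‖ = 1} are nondecreasing in α. -/
/-!
A unit ground state `g₁` of `K(a) = L - aΔ` is a trial vector for `K(b)` and vice versa, so for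
`a < b` the two Rayleigh-quotient bounds give
`(b - a) ⟨g₁, Δ g₁⟩ ≤ m(a) - m(b) ≤ (b - a) ⟨g₂, Δ g₂⟩`.
Hence every value of `⟨g, Δ g⟩` on `σ(a)` lies below every value on `σ(b)`, which makes both the
supremum and the infimum monotone; comparing with a larger (smaller) parameter also bounds
these sets above (below).
-/

open Matrix BigOperators

section
variable {ι β : Type*} [PartialOrder ι] [ConditionallyCompleteLattice β] {S : ι → Set β}

theorem monotone_csSup_of_forall_lt [NoMaxOrder ι] (hne : ∀ a, (S a).Nonempty)
    (hle : ∀ a b, a < b → ∀ x ∈ S a, ∀ y ∈ S b, x ≤ y) : Monotone fun a => sSup (S a) := by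
  intro a b hab
  obtain rfl | hab := hab.eq_or_lt
  · rfl
  obtain ⟨c, hbc⟩ := exists_gt b
  obtain ⟨z, hz⟩ := hne c
  have hbdd : BddAbove (S b) := ⟨z, fun y hy => hle b c hbc y hy z hz⟩
  obtain ⟨y, hy⟩ := hne b
  exact csSup_le (hne a) fun x hx => (hle a b hab x hx y hy).trans (le_csSup hbdd hy)

theorem monotone_csInf_of_forall_lt [NoMinOrder ι] (hne : ∀ a, (S a).Nonempty)
    (hle : ∀ a b, a < b → ∀ x ∈ S a, ∀ y ∈ S b, x ≤ y) : Monotone fun a => sInf (S a) := by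
  intro a b hab
  obtain rfl | hab := hab.eq_or_lt
  · rfl
  obtain ⟨c, hca⟩ := exists_lt a
  obtain ⟨z, hz⟩ := hne c
  have hbdd : BddBelow (S a) := ⟨z, fun x hx => hle c a hca z hz x hx⟩
  obtain ⟨x, hx⟩ := hne a
  exact le_csInf (hne b) fun y hy => (csInf_le hbdd hx).trans (hle a b hab x hx y hy)

end

theorem GraphLaplacian.isHermitian_L {N : ℕ} (G : GraphLaplacian N) : G.L.IsHermitian := by
  ext i j
  by_cases h : i = j
  · subst h; rfl
  · simp [GraphLaplacian.L, h, Ne.symm h, G.symm]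

namespace Matrix

variable {n : Type*} [Fintype n]

theorem IsHermitian.posSemidef_sub_smul_one [DecidableEq n] {A : Matrix n n ℝ}
    (hA : A.IsHermitian) {m : ℝ}
    (hm : m ∈ lowerBounds {μ : ℝ | ∃ v : n → ℝ, v ≠ 0 ∧ A *ᵥ v = μ • v}) :
    (A - m • 1).PosSemidef := by
  have hB : (A - m • 1).IsHermitian := hA.sub (isHermitian_one.smul rfl)
  rw [hB.posSemidef_iff_eigenvalues_nonneg]
  intro i
  have hv := hB.mulVec_eigenvectorBasis i
  rw [sub_mulVec, smul_mulVec, one_mulVec, sub_eq_iff_eq_add, ← add_smul] at hv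
  have := hm ⟨_, (WithLp.ofLp_eq_zero 2).ne.2 (hB.eigenvectorBasis.orthonormal.ne_zero i), hv⟩
  exact le_add_iff_nonneg_left m |>.1 this

theorem IsHermitian.mul_dotProduct_self_le [DecidableEq n] {A : Matrix n n ℝ}
    (hA : A.IsHermitian) {m : ℝ}
    (hm : m ∈ lowerBounds {μ : ℝ | ∃ v : n → ℝ, v ≠ 0 ∧ A *ᵥ v = μ • v}) (g : n → ℝ) :
    m * (g ⬝ᵥ g) ≤ g ⬝ᵥ (A *ᵥ g) := by
  have := (hA.posSemidef_sub_smul_one hm).dotProduct_mulVec_nonneg g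
  rw [star_trivial, sub_mulVec, dotProduct_sub, smul_mulVec, one_mulVec, dotProduct_smul,
    smul_eq_mul] at this
  linarith

theorem exists_dotProduct_self_eq_one_of_mulVec_eq_smul {A : Matrix n n ℝ} {μ : ℝ} {v : n → ℝ}
    (hv : v ≠ 0) (h : A *ᵥ v = μ • v) : ∃ g : n → ℝ, g ⬝ᵥ g = 1 ∧ A *ᵥ g = μ • g := by
  have hpos : 0 < v ⬝ᵥ v := by simpa using dotProduct_self_star_pos_iff.2 hv
  refine ⟨(√(v ⬝ᵥ v))⁻¹ • v, ?_, by rw [mulVec_smul, h, smul_comm]⟩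
  rw [smul_dotProduct, dotProduct_smul, smul_eq_mul, smul_eq_mul, ← mul_assoc, ← mul_inv,
    Real.mul_self_sqrt hpos.le, inv_mul_cancel₀ hpos.ne']

theorem dotProduct_sub_smul_mulVec (L Δ : Matrix n n ℝ) (α : ℝ) (g : n → ℝ) :
    g ⬝ᵥ ((L - α • Δ) *ᵥ g) = g ⬝ᵥ (L *ᵥ g) - α * (g ⬝ᵥ (Δ *ᵥ g)) := by
  rw [sub_mulVec, dotProduct_sub, smul_mulVec, dotProduct_smul, smul_eq_mul]

theorem dotProduct_mulVec_le_of_ground_states {L Δ : Matrix n n ℝ} {a b ma mb : ℝ} (hab : a < b)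
    {g₁ g₂ : n → ℝ} (hg₁ : g₁ ⬝ᵥ g₁ = 1) (hg₂ : g₂ ⬝ᵥ g₂ = 1)
    (he₁ : (L - a • Δ) *ᵥ g₁ = ma • g₁) (he₂ : (L - b • Δ) *ᵥ g₂ = mb • g₂)
    (hb : mb ≤ g₁ ⬝ᵥ ((L - b • Δ) *ᵥ g₁)) (ha : ma ≤ g₂ ⬝ᵥ ((L - a • Δ) *ᵥ g₂)) :
    g₁ ⬝ᵥ (Δ *ᵥ g₁) ≤ g₂ ⬝ᵥ (Δ *ᵥ g₂) := by
  have h₁ : g₁ ⬝ᵥ ((L - a • Δ) *ᵥ g₁) = ma := by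
    rw [he₁, dotProduct_smul, hg₁, smul_eq_mul, mul_one]
  have h₂ : g₂ ⬝ᵥ ((L - b • Δ) *ᵥ g₂) = mb := by
    rw [he₂, dotProduct_smul, hg₂, smul_eq_mul, mul_one]
  rw [dotProduct_sub_smul_mulVec] at h₁ h₂ ha hb
  have : (b - a) * (g₁ ⬝ᵥ (Δ *ᵥ g₁)) ≤ (b - a) * (g₂ ⬝ᵥ (Δ *ᵥ g₂)) := by linarith
  exact le_of_mul_le_mul_left this (sub_pos.2 hab)

end Matrix

theorem H_plus_minus_monotone_general {N : ℕ} (G : GraphLaplacian N)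
    (lam : Fin N → ℝ)
    (m : ℝ → ℝ)
    (hm : ∀ α : ℝ, IsLeast {μ : ℝ | ∃ v : Fin N → ℝ, v ≠ 0 ∧
      (G.L - α • Matrix.diagonal lam) *ᵥ v = μ • v} (m α)) :
    Monotone (fun α : ℝ => sSup {x : ℝ | ∃ g : Fin N → ℝ, g ⬝ᵥ g = 1 ∧
        (G.L - α • Matrix.diagonal lam) *ᵥ g = m α • g ∧
        x = g ⬝ᵥ (Matrix.diagonal lam *ᵥ g)}) ∧
    Monotone (fun α : ℝ => sInf {x : ℝ | ∃ g : Fin N → ℝ, g ⬝ᵥ g = 1 ∧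
        (G.L - α • Matrix.diagonal lam) *ᵥ g = m α • g ∧
        x = g ⬝ᵥ (Matrix.diagonal lam *ᵥ g)}) := by
  have hK (α : ℝ) : (G.L - α • diagonal lam).IsHermitian :=
    G.isHermitian_L.sub ((isHermitian_diagonal lam).smul rfl)
  have hlb (α : ℝ) (g : Fin N → ℝ) (hg : g ⬝ᵥ g = 1) :
      m α ≤ g ⬝ᵥ ((G.L - α • diagonal lam) *ᵥ g) := by
    simpa only [hg, mul_one] using (hK α).mul_dotProduct_self_le (hm α).2 g
  refine ⟨monotone_csSup_of_forall_lt ?nonempty ?le, monotone_csInf_of_forall_lt ?nonempty ?le⟩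
  case nonempty =>
    intro α
    obtain ⟨v, hv, he⟩ := (hm α).1
    obtain ⟨g, hg, hge⟩ := exists_dotProduct_self_eq_one_of_mulVec_eq_smul hv he
    exact ⟨_, g, hg, hge, rfl⟩
  case le =>
    rintro a b hab _ ⟨g₁, hg₁, he₁, rfl⟩ _ ⟨g₂, hg₂, he₂, rfl⟩
    exact dotProduct_mulVec_le_of_ground_states hab hg₁ hg₂ he₁ he₂ (hlb b g₁ hg₁) (hlb a g₂ hg₂)

/-- `H₊(α)` and `H₋(α)`, the extreme values of `⟨g, Δ g⟩` over unit vectors in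
the minimal eigenspace `σ(α)` of `K(α) = L - αΔ`, are nondecreasing in `α`. -/
theorem H_plus_minus_monotone {N : ℕ} (G : GraphLaplacian N)
    (χ : Matrix (Fin N) (Fin N) ℝ) (lam : Fin N → ℝ)
    (hχ : χᵀ * χ = 1)
    (hdiag : χᵀ * G.L * χ = Matrix.diagonal lam)
    (m : ℝ → ℝ)
    (hm : ∀ α : ℝ, IsLeast {μ : ℝ | ∃ v : Fin N → ℝ, v ≠ 0 ∧
      (G.L - α • Matrix.diagonal lam) *ᵥ v = μ • v} (m α)) :
    Monotone (fun α : ℝ => sSup {x : ℝ | ∃ g : Fin N → ℝ, g ⬝ᵥ g = 1 ∧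
        (G.L - α • Matrix.diagonal lam) *ᵥ g = m α • g ∧
        x = g ⬝ᵥ (Matrix.diagonal lam *ᵥ g)}) ∧
    Monotone (fun α : ℝ => sInf {x : ℝ | ∃ g : Fin N → ℝ, g ⬝ᵥ g = 1 ∧
        (G.L - α • Matrix.diagonal lam) *ᵥ g = m α • g ∧
        x = g ⬝ᵥ (Matrix.diagonal lam *ᵥ g)}) :=
  H_plus_minus_monotone_general G lam m hm
end

section
/- For the unit-weighted complete graph on N ≥ 3 vertices, the minimal eigenvalue of K(α) = L - αΔ is m(α) = -αN - (-N(α+1) + √((N(α+1)-2)² + 4(N-1)))/2 for all α ∈ ℝ. -/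
/-!
Write `n = N`, `T = n - αn` and `s = ∑ v`. The eigenvalue equation `K(α) v = μ v` reads
`(n - μ) v₀ = s` and `(T - μ) vᵢ = s` for `i ≠ 0`. Either `μ = T`, or all `vᵢ` with `i ≠ 0`
are equal, and summing the equations forces `s ≠ 0` and `μ² - Tμ - αn(n - 1) = 0`.
The smaller root `(T - √(T² + 4αn(n - 1)))/2` of this quadratic is an eigenvalue,
it lies below the other root, and it lies below `T` because `α ≥ 0` whenever `T < 0`.
-/

open Matrix

noncomputable def completeGraphK (N : ℕ) (α : ℝ) : Matrix (Fin N) (Fin N) ℝ :=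
  ((N : ℝ) • (1 : Matrix (Fin N) (Fin N) ℝ) - Matrix.of fun _ _ => (1 : ℝ)) -
    α • Matrix.diagonal (fun i : Fin N => if (i : ℕ) = 0 then 0 else (N : ℝ))

theorem Fin.sum_ite_val_eq_zero {R : Type*} [CommRing R] {N : ℕ} (hN : 0 < N) (a b : R) :
    ∑ j : Fin N, (if (j : ℕ) = 0 then a else b) = a + ((N : R) - 1) * b := by
  obtain ⟨k, rfl⟩ := Nat.exists_eq_add_of_lt hN
  simp [Fin.sum_univ_succ]

theorem quadratic_sub_sqrt_div_two_eq_zero {T c : ℝ} (hD : 0 ≤ T ^ 2 + 4 * c) :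
    ((T - √(T ^ 2 + 4 * c)) / 2) ^ 2 - T * ((T - √(T ^ 2 + 4 * c)) / 2) - c = 0 := by
  linear_combination Real.sq_sqrt hD / 4

theorem sub_sqrt_div_two_le_of_root {T c μ : ℝ} (hμ : μ ^ 2 - T * μ - c = 0) :
    (T - √(T ^ 2 + 4 * c)) / 2 ≤ μ := by
  have hD : T ^ 2 + 4 * c = (2 * μ - T) ^ 2 := by linear_combination -4 * hμ
  rw [hD, Real.sqrt_sq_eq_abs]
  linarith [neg_abs_le (2 * μ - T)]

theorem sub_sqrt_div_two_le_self {T c : ℝ} (h : 0 ≤ T ∨ 0 ≤ c) :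
    (T - √(T ^ 2 + 4 * c)) / 2 ≤ T := by
  rcases h with hT | hc
  · linarith [Real.sqrt_nonneg (T ^ 2 + 4 * c)]
  · have : |T| ≤ √(T ^ 2 + 4 * c) := by
      rw [← Real.sqrt_sq_eq_abs]
      exact Real.sqrt_le_sqrt (by linarith)
    linarith [neg_abs_le T]

section CompleteGraphK

variable {N : ℕ} {α μ : ℝ} {v : Fin N → ℝ}

theorem completeGraphK_mulVec_apply (i : Fin N) :
    (completeGraphK N α *ᵥ v) i =
      N * v i - ∑ j, v j - (if (i : ℕ) = 0 then 0 else α * N * v i) := by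
  simp [completeGraphK, mulVec, dotProduct, one_apply, diagonal, sub_mul, mul_ite, ite_mul,
    Finset.sum_sub_distrib, mul_assoc]

theorem completeGraphK_eigen_row (h : completeGraphK N α *ᵥ v = μ • v) (i : Fin N) :
    (if (i : ℕ) = 0 then (N - μ) else (N - α * N - μ)) * v i = ∑ j, v j := by
  have hi := congrFun h i
  rw [completeGraphK_mulVec_apply] at hi
  simp only [Pi.smul_apply, smul_eq_mul] at hi
  split_ifs at hi ⊢ <;> linarith

theorem eq_or_quadratic_eq_zero_of_completeGraphK_eigen (hv : v ≠ 0)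
    (h : completeGraphK N α *ᵥ v = μ • v) :
    μ = N - α * N ∨ μ ^ 2 - (N - α * N) * μ - α * N * (N - 1) = 0 := by
  refine or_iff_not_imp_left.mpr fun hμ => ?_
  have hT : (N : ℝ) - α * N - μ ≠ 0 := sub_ne_zero.mpr (Ne.symm hμ)
  obtain ⟨i₀, hi₀⟩ : ∃ i₀ : Fin N, (i₀ : ℕ) = 0 := by
    obtain ⟨j, -⟩ := Function.ne_iff.mp hv
    exact ⟨⟨0, j.pos⟩, rfl⟩
  have hN : 0 < N := i₀.pos
  set s := ∑ j, v j
  have hrow₀ : (N - μ) * v i₀ = s := by simpa [hi₀] using completeGraphK_eigen_row h i₀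
  have hrow : ∀ j : Fin N, (N - α * N - μ) * v j =
      if (j : ℕ) = 0 then (N - α * N - μ) * v i₀ else s := fun j => by
    by_cases hj : (j : ℕ) = 0
    · rw [if_pos hj, Fin.ext (hj.trans hi₀.symm)]
    · simpa [hj] using completeGraphK_eigen_row h j
  have hsum : (N - α * N - μ) * s = (N - α * N - μ) * v i₀ + (N - 1) * s := by
    rw [Finset.mul_sum, Finset.sum_congr rfl fun j _ => hrow j, Fin.sum_ite_val_eq_zero hN]
  have hs : s ≠ 0 := by
    intro hs0
    have hvi₀ : v i₀ = 0 := by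
      rw [hs0] at hsum
      simpa [hT] using hsum
    refine hv (funext fun j => ?_)
    have hj := hrow j
    split_ifs at hj
    · simpa [hvi₀, hT] using hj
    · simpa [hs0, hT] using hj
  have hquad : s * (μ ^ 2 - (N - α * N) * μ - α * N * (N - 1)) = 0 := by
    linear_combination (N - μ) * hsum + (N - α * N - μ) * hrow₀
  exact (mul_eq_zero.mp hquad).resolve_left hs

theorem completeGraphK_mulVec_eigenvector {m : ℝ}
    (hm : m ^ 2 - (N - α * N) * m - α * N * (N - 1) = 0) :
    completeGraphK N α *ᵥ (fun i : Fin N => if (i : ℕ) = 0 then (N : ℝ) - 1 else N - 1 - m) =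
      m • fun i : Fin N => if (i : ℕ) = 0 then (N : ℝ) - 1 else N - 1 - m := by
  funext i
  rw [completeGraphK_mulVec_apply, Fin.sum_ite_val_eq_zero i.pos]
  simp only [Pi.smul_apply, smul_eq_mul]
  split_ifs
  · ring
  · linear_combination hm

end CompleteGraphK

/-- for the unit-weighted complete graph on `N ≥ 3` vertices, the minimal
eigenvalue of `K(α) = L - αΔ` is
`m(α) = -αN - (-N(α+1) + √((N(α+1)-2)² + 4(N-1)))/2` for all `α ∈ ℝ`. -/
theorem complete_graph_min_eigenvalue (N : ℕ) (hN : 3 ≤ N) (α : ℝ) :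
    IsLeast {μ : ℝ | ∃ v : Fin N → ℝ, v ≠ 0 ∧
        (((N : ℝ) • (1 : Matrix (Fin N) (Fin N) ℝ) - Matrix.of fun _ _ => (1 : ℝ)) -
            α • Matrix.diagonal (fun i : Fin N => if (i : ℕ) = 0 then 0 else (N : ℝ)))
          *ᵥ v = μ • v}
      (-α * N - (-(N : ℝ) * (α + 1) +
        Real.sqrt ((N * (α + 1) - 2) ^ 2 + 4 * (N - 1))) / 2) := by
  have hn : (2 : ℝ) ≤ N := by exact_mod_cast (by omega : 2 ≤ N)
  set T : ℝ := N - α * N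
  set c : ℝ := α * N * (N - 1)
  have hD : ((N : ℝ) * (α + 1) - 2) ^ 2 + 4 * (N - 1) = T ^ 2 + 4 * c := by ring
  have hm : -α * N - (-(N : ℝ) * (α + 1) + √((N * (α + 1) - 2) ^ 2 + 4 * (N - 1))) / 2 =
      (T - √(T ^ 2 + 4 * c)) / 2 := by
    rw [hD]
    ring
  rw [hm]
  have hroot := quadratic_sub_sqrt_div_two_eq_zero (hD ▸ add_nonneg (sq_nonneg _) (by linarith))
  refine ⟨⟨_, fun h0 => ?_, completeGraphK_mulVec_eigenvector hroot⟩, ?_⟩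
  · have := congrFun h0 ⟨0, by omega⟩
    simp at this
    linarith
  · rintro μ ⟨v, hv, hμ⟩
    rcases eq_or_quadratic_eq_zero_of_completeGraphK_eigen hv hμ with rfl | hq
    · refine sub_sqrt_div_two_le_self ((lt_or_ge α 0).imp (fun hα => ?_) fun hα => ?_)
      · nlinarith
      · exact mul_nonneg (by positivity) (by linarith)
    · exact sub_sqrt_div_two_le_of_root hq
end
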